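/- Fix k ≥ 1 and let C = (F, Init, P) be a deterministic transition system over input type I and state type S. Then P is k-inductive in C if and only if P'_k is 1-inductive in the witness system C'_k (i.e., for every initial state w of C'_k and every input i, P'_k i w holds; and for every witness state w and all inputs i0, i1, P'_k i0 w implies P'_k i1 (F'_k i0 w)). -/

import Mathlib

/-- A (deterministic) trace: `s (n+1) = F (x n) (s n)` for all `n`. -/
def IsTrace {I S : Type*} (F : I → S → S) (x : ℕ → I) (s : ℕ → S) : Prop :=
  ∀ n, s (n + 1) = F (x n) (s n)

/-- The system `(F, Init, P)` is safe: every initialized trace satisfies the property. -/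
def Safe {I S : Type*} (F : I → S → S) (Init : Set S) (P : I → S → Prop) : Prop :=
  ∀ x s, IsTrace F x s → s 0 ∈ Init → ∀ n, P (x n) (s n)

/-- `P` is `k`-inductive in `(F, Init, P)`: BMC of depth `k-1` and consecution of depth `k`. -/
def KInductive {I S : Type*} (k : ℕ) (F : I → S → S) (Init : Set S) (P : I → S → Prop) :
    Prop :=
  (∀ x s, IsTrace F x s → s 0 ∈ Init → ∀ n < k, P (x n) (s n)) ∧
  (∀ x s, IsTrace F x s → (∀ n < k, P (x n) (s n)) → P (x k) (s k))

/-- The state type of the witness system: `k` copies of the latches,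
`k-1` copies of the inputs, and `k` initialization bits. -/
abbrev WState (k : ℕ) (I S : Type*) : Type _ :=
  (Fin k → S) × (Fin (k - 1) → I) × (Fin k → Bool)

/-- The transition function of the witness system. -/
def WTrans {I S : Type*} (k : ℕ) (F : I → S → S) (i : I) (w : WState k I S) :
    WState k I S :=
  ⟨fun j => if _h : (j : ℕ) = k - 1 then F i (w.1 j) else w.1 ⟨(j : ℕ) + 1, by omega⟩,
   fun j => if _h : (j : ℕ) = k - 2 then i else w.2.1 ⟨(j : ℕ) + 1, by omega⟩,
   fun j => if _h : (j : ℕ) = k - 1 then w.2.2 j else w.2.2 ⟨(j : ℕ) + 1, by omega⟩⟩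

/-- The initial states of the witness system. -/
def WInit (k : ℕ) (hk : 0 < k) (I : Type*) {S : Type*} (Init : Set S) :
    Set (WState k I S) :=
  {w | w.1 ⟨k - 1, by omega⟩ ∈ Init ∧ w.2.2 ⟨k - 1, by omega⟩ = true ∧
       ∀ j : Fin k, (j : ℕ) < k - 1 → w.2.2 j = false}

/-- The extended input sequence `X`: `X j = x j` for `j < k - 1` and `X (k-1) = i`. -/
def WX {I : Type*} (k : ℕ) (i : I) (x : Fin (k - 1) → I) (j : Fin k) : I :=
  if h : (j : ℕ) = k - 1 then i else x ⟨(j : ℕ), by omega⟩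

/-- The property of the witness system: the conjunction of `p0`–`p4`. -/
def WProp {I S : Type*} (k : ℕ) (hk : 0 < k) (F : I → S → S) (Init : Set S)
    (P : I → S → Prop) (i : I) (w : WState k I S) : Prop :=
  (∀ j : Fin k, ∀ hj : (j : ℕ) < k - 1,
      w.2.2 j = true → w.2.2 ⟨(j : ℕ) + 1, by omega⟩ = true) ∧
  (∀ j : Fin k, ∀ hj : (j : ℕ) < k - 1,
      w.2.2 j = true → w.1 ⟨(j : ℕ) + 1, by omega⟩ = F (WX k i w.2.1 j) (w.1 j)) ∧
  (∀ j : Fin k, w.2.2 j = true → P (WX k i w.2.1 j) (w.1 j)) ∧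
  (∀ j : Fin k, 1 ≤ (j : ℕ) →
      w.2.2 ⟨(j : ℕ) - 1, by omega⟩ = false → w.2.2 j = true → w.1 j ∈ Init) ∧
  (w.2.2 ⟨k - 1, by omega⟩ = true)

/-!
Read a witness state `(ℓ, x, b)` as a window onto a run of `C`: the set bits form a suffix
`[m, k)` of positions, on which `ℓ` is a trace segment driven by `x` (and the current input)
satisfying `P`, and which starts in an initial state unless `m = 0`. One step of `C'_k` shifts
the window and appends the successor of `ℓ (k-1)`; `P` holds there by the base case of
`k`-induction when `m > 0` (an initialized segment shorter than `k + 1`) and by its inductive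
step when `m = 0` (a segment of length `k + 1`). Conversely, a run of `C` is tracked by the top
latch of a run of `C'_k`, and a window full of `k` good states is a witness state satisfying
`P'_k`, whose successor then certifies `P` at position `k`.
-/

section TransitionSystem

variable {I S : Type*} {F : I → S → S} {Init : Set S} {P : I → S → Prop}

def traceFrom (F : I → S → S) (x : ℕ → I) (s₀ : S) : ℕ → S
  | 0 => s₀
  | n + 1 => F (x n) (traceFrom F x s₀ n)

theorem isTrace_traceFrom (x : ℕ → I) (s₀ : S) : IsTrace F x (traceFrom F x s₀) :=
  fun _ => rfl

theorem traceFrom_eq_of_step {x : ℕ → I} {s : ℕ → S} {d : ℕ}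
    (hstep : ∀ n < d, s (n + 1) = F (x n) (s n)) : ∀ n ≤ d, traceFrom F x (s 0) n = s n
  | 0, _ => rfl
  | n + 1, hn => by
    rw [traceFrom, traceFrom_eq_of_step hstep n (by omega), hstep n (by omega)]

theorem KInductive.prop_of_segment {k d : ℕ} (hind : KInductive k F Init P) {x : ℕ → I}
    {s : ℕ → S} (hstep : ∀ n < d, s (n + 1) = F (x n) (s n)) (hd : d ≤ k)
    (hstart : d = k ∨ s 0 ∈ Init) (hP : ∀ n < d, P (x n) (s n)) : P (x d) (s d) := by
  have hs := traceFrom_eq_of_step hstep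
  rw [← hs d le_rfl]
  rcases hd.lt_or_eq with hlt | rfl
  · exact hind.1 x _ (isTrace_traceFrom x _) (hstart.resolve_left hlt.ne) d hlt
  · exact hind.2 x _ (isTrace_traceFrom x _) fun n hn => hs n hn.le ▸ hP n hn

theorem KInductive.prop_of_mem {k : ℕ} (hind : KInductive k F Init P) {s : S} (hs : s ∈ Init)
    (i : I) : P i s :=
  hind.prop_of_segment (x := fun _ => i) (s := fun _ => s) (d := 0) (by simp) k.zero_le
    (Or.inr hs) (by simp)

end TransitionSystem

section WitnessSystem

variable {I S : Type*} {F : I → S → S} {Init : Set S} {P : I → S → Prop} {k : ℕ}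

theorem WX_last (hk : 0 < k) (i : I) (x : Fin (k - 1) → I) :
    WX k i x ⟨k - 1, by omega⟩ = i :=
  dif_pos rfl

theorem WX_of_lt (i : I) (x : Fin (k - 1) → I) {j : Fin k} (hj : (j : ℕ) < k - 1) :
    WX k i x j = x ⟨j, hj⟩ :=
  dif_neg hj.ne

theorem WTrans_fst_last (hk : 0 < k) (i : I) (w : WState k I S) :
    (WTrans k F i w).1 ⟨k - 1, by omega⟩ = F i (w.1 ⟨k - 1, by omega⟩) :=
  dif_pos rfl

theorem WTrans_fst_of_lt (i : I) (w : WState k I S) {j : Fin k} (hj : (j : ℕ) < k - 1) :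
    (WTrans k F i w).1 j = w.1 ⟨j + 1, by omega⟩ :=
  dif_neg hj.ne

theorem WTrans_bits_last (hk : 0 < k) (i : I) (w : WState k I S) :
    (WTrans k F i w).2.2 ⟨k - 1, by omega⟩ = w.2.2 ⟨k - 1, by omega⟩ :=
  dif_pos rfl

theorem WTrans_bits_of_lt (i : I) (w : WState k I S) {j : Fin k} (hj : (j : ℕ) < k - 1) :
    (WTrans k F i w).2.2 j = w.2.2 ⟨j + 1, by omega⟩ :=
  dif_neg hj.ne

theorem WX_WTrans_of_lt (i₀ i₁ : I) (w : WState k I S) {j : Fin k} (hj : (j : ℕ) < k - 1) :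
    WX k i₁ (WTrans k F i₀ w).2.1 j = WX k i₀ w.2.1 ⟨j + 1, by omega⟩ := by
  simp only [WX, WTrans]
  split_ifs <;> first | rfl | omega

variable {hk : 0 < k} {i : I} {w : WState k I S}

theorem WProp.prop_last (h : WProp k hk F Init P i w) : P i (w.1 ⟨k - 1, by omega⟩) := by
  simpa only [WX_last hk] using h.2.2.1 _ h.2.2.2.2

theorem WProp.exists_bits_iff_le (h : WProp k hk F Init P i w) :
    ∃ m < k, ∀ j : Fin k, w.2.2 j = true ↔ m ≤ j := by
  have hex : ∃ n, ∃ hn : n < k, w.2.2 ⟨n, hn⟩ = true := ⟨k - 1, by omega, h.2.2.2.2⟩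
  obtain ⟨hm, hbm⟩ := Nat.find_spec hex
  have hup : ∀ n ≥ Nat.find hex, ∀ hn : n < k, w.2.2 ⟨n, hn⟩ = true := by
    intro n hmn
    induction n, hmn using Nat.le_induction with
    | base => exact fun _ => hbm
    | succ n _ ih => exact fun hn => h.1 ⟨n, by omega⟩ (by simp; omega) (ih (by omega))
  exact ⟨Nat.find hex, hm, fun j =>
    ⟨fun hj => Nat.find_min' hex ⟨j.2, hj⟩, fun hj => hup j hj j.2⟩⟩

theorem WProp.prop_next (hind : KInductive k F Init P) (h : WProp k hk F Init P i w)
    (i' : I) : P i' (F i (w.1 ⟨k - 1, by omega⟩)) := by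
  obtain ⟨m, hmk, hbits⟩ := h.exists_bits_iff_le
  obtain ⟨-, hstep, hprop, hinit, -⟩ := h
  let s : ℕ → S := fun n =>
    if hn : m + n < k then w.1 ⟨m + n, hn⟩ else F i (w.1 ⟨k - 1, by omega⟩)
  let x : ℕ → I := fun n => if hn : m + n < k then WX k i w.2.1 ⟨m + n, hn⟩ else i'
  have hs : ∀ n (hn : m + n < k), s n = w.1 ⟨m + n, hn⟩ := fun n hn => dif_pos hn
  have hx : ∀ n (hn : m + n < k), x n = WX k i w.2.1 ⟨m + n, hn⟩ := fun n hn => dif_pos hn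
  have hend : ¬ m + (k - m) < k := by omega
  have key := hind.prop_of_segment (x := x) (s := s) (d := k - m) ?_ (by omega) ?_ ?_
  · simpa only [x, s, dif_neg hend] using key
  · intro n hn
    have hb : w.2.2 ⟨m + n, by omega⟩ = true := (hbits _).2 (by simp)
    rw [hs n (by omega), hx n (by omega)]
    by_cases hlast : m + n + 1 < k
    · rw [hs (n + 1) hlast]
      exact hstep ⟨m + n, _⟩ (by simp; omega) hb
    · have e : (⟨m + n, by omega⟩ : Fin k) = ⟨k - 1, by omega⟩ := Fin.ext (by simp; omega)
      simp only [s, dif_neg (show ¬ m + (n + 1) < k by omega), e, WX_last hk]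
  · rcases Nat.eq_zero_or_pos m with rfl | hm
    · exact Or.inl (Nat.sub_zero k)
    · refine Or.inr ?_
      rw [hs 0 (by omega)]
      exact hinit ⟨m, _⟩ hm (by simp [← Bool.not_eq_true, hbits]; omega) ((hbits _).2 le_rfl)
  · intro n hn
    rw [hs n (by omega), hx n (by omega)]
    exact hprop _ ((hbits _).2 (by simp))

theorem WProp.step {i' : I} (h : WProp k hk F Init P i w)
    (hnext : P i' (F i (w.1 ⟨k - 1, by omega⟩))) :
    WProp k hk F Init P i' (WTrans k F i w) := by
  obtain ⟨hmono, hstep, hprop, hinit, htop⟩ := h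
  have hlast : ∀ n (hn : n < k), ¬ n < k - 1 → (⟨n, hn⟩ : Fin k) = ⟨k - 1, by omega⟩ :=
    fun n _ hn => Fin.ext (by simp; omega)
  refine ⟨fun j hj hb => ?_, fun j hj hb => ?_, fun j hb => ?_, fun j hj hf hb => ?_,
    (WTrans_bits_last hk i w).trans htop⟩
  · rw [WTrans_bits_of_lt _ _ hj] at hb
    by_cases hl : (j : ℕ) + 1 < k - 1
    · exact (WTrans_bits_of_lt i w hl).trans (hmono _ hl hb)
    · rw [hlast _ _ hl, WTrans_bits_last hk]
      exact htop
  · rw [WTrans_bits_of_lt _ _ hj] at hb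
    rw [WX_WTrans_of_lt _ _ _ hj, WTrans_fst_of_lt _ _ hj]
    by_cases hl : (j : ℕ) + 1 < k - 1
    · exact (WTrans_fst_of_lt i w hl).trans (hstep _ hl hb)
    · rw [hlast _ _ hl, WTrans_fst_last hk, WX_last hk]
  · by_cases hl : (j : ℕ) < k - 1
    · rw [WTrans_bits_of_lt _ _ hl] at hb
      rw [WX_WTrans_of_lt _ _ _ hl, WTrans_fst_of_lt _ _ hl]
      exact hprop _ hb
    · obtain rfl : j = ⟨k - 1, Nat.sub_one_lt_of_lt hk⟩ := Fin.ext (by simp; omega)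
      rw [WX_last hk, WTrans_fst_last hk]
      exact hnext
  · rw [WTrans_bits_of_lt i w (j := ⟨j - 1, by omega⟩) (by simp; omega)] at hf
    by_cases hl : (j : ℕ) < k - 1
    · rw [WTrans_bits_of_lt _ _ hl] at hb
      rw [WTrans_fst_of_lt _ _ hl]
      exact hinit _ (by simp) (by convert hf using 3; simp; omega) hb
    · have hf' : w.2.2 ⟨k - 1, by omega⟩ = false := by convert hf using 3; simp; omega
      simp [hf'] at htop

theorem wProp_of_mem_WInit (hP : ∀ s ∈ Init, ∀ i, P i s) (hw : w ∈ WInit k hk I Init)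
    (i : I) : WProp k hk F Init P i w := by
  obtain ⟨hinit, htop, hlow⟩ := hw
  have hlast : ∀ j : Fin k, w.2.2 j = true → j = ⟨k - 1, Nat.sub_one_lt_of_lt hk⟩ :=
    fun j hb => Fin.ext <| by_contra fun hne => by
      rw [hlow j (by simp at hne; omega)] at hb
      exact Bool.false_ne_true hb
  refine ⟨fun j hj hb => ?_, fun j hj hb => ?_, fun j hb => ?_, fun j _ _ hb => ?_, htop⟩
  · exact absurd (congrArg Fin.val (hlast j hb)) hj.ne
  · exact absurd (congrArg Fin.val (hlast j hb)) hj.ne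
  · obtain rfl := hlast j hb
    rw [WX_last hk]
    exact hP _ hinit i
  · obtain rfl := hlast j hb
    exact hinit

theorem wProp_window {x : ℕ → I} {s : ℕ → S} (hx : IsTrace F x s)
    (hP : ∀ n < k, P (x n) (s n)) :
    WProp k hk F Init P (x (k - 1)) (fun j => s j, fun j => x j, fun _ => true) := by
  refine ⟨fun _ _ _ => rfl, fun j hj _ => ?_, fun j _ => ?_, fun _ _ hf _ => by simp at hf, rfl⟩
  · rw [WX_of_lt _ _ hj]
    exact hx j
  · by_cases hj : (j : ℕ) < k - 1
    · rw [WX_of_lt _ _ hj]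
      exact hP j j.2
    · obtain rfl : j = ⟨k - 1, Nat.sub_one_lt_of_lt hk⟩ := Fin.ext (by simp; omega)
      rw [WX_last hk]
      exact hP _ (by omega)

theorem exists_wProp_last_eq (hinit : ∀ w ∈ WInit k hk I Init, ∀ i, WProp k hk F Init P i w)
    (hcons : ∀ (w : WState k I S) (i₀ i₁ : I),
      WProp k hk F Init P i₀ w → WProp k hk F Init P i₁ (WTrans k F i₀ w))
    {x : ℕ → I} {s : ℕ → S} (hx : IsTrace F x s) (hs : s 0 ∈ Init) (n : ℕ) :
    ∃ w : WState k I S, (∀ i, WProp k hk F Init P i w) ∧ w.1 ⟨k - 1, by omega⟩ = s n := by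
  induction n with
  | zero =>
    refine ⟨(fun _ => s 0, fun _ => x 0, fun j => decide ((j : ℕ) = k - 1)),
      hinit _ ⟨hs, by simp, fun j hj => by simpa using hj.ne⟩, rfl⟩
  | succ n ih =>
    obtain ⟨w, hw, hwn⟩ := ih
    exact ⟨WTrans k F (x n) w, fun i => hcons w _ i (hw _),
      by rw [WTrans_fst_last hk, hwn, hx n]⟩

theorem safe_of_wProp_oneInductive
    (hinit : ∀ w ∈ WInit k hk I Init, ∀ i, WProp k hk F Init P i w)
    (hcons : ∀ (w : WState k I S) (i₀ i₁ : I),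
      WProp k hk F Init P i₀ w → WProp k hk F Init P i₁ (WTrans k F i₀ w)) :
    Safe F Init P := fun x s hx hs n => by
  obtain ⟨w, hw, hwn⟩ := exists_wProp_last_eq hinit hcons hx hs n
  exact hwn ▸ (hw (x n)).prop_last

end WitnessSystem

/-- `P` is `k`-inductive in `C` iff `P'_k` is `1`-inductive in the witness
system `C'_k`. -/
theorem kInductive_iff_witness_oneInductive (k : ℕ) (hk : 0 < k) {I S : Type*}
    (F : I → S → S) (Init : Set S) (P : I → S → Prop) :
    KInductive k F Init P ↔
      ((∀ w ∈ WInit k hk I Init, ∀ i : I, WProp k hk F Init P i w) ∧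
       (∀ (w : WState k I S) (i0 i1 : I),
         WProp k hk F Init P i0 w → WProp k hk F Init P i1 (WTrans k F i0 w))) := by
  constructor
  · intro hind
    exact ⟨fun w hw => wProp_of_mem_WInit (fun _ hs => hind.prop_of_mem hs) hw,
      fun w i₀ i₁ h => h.step (h.prop_next hind i₁)⟩
  · rintro ⟨hinit, hcons⟩
    refine ⟨fun x s hx hs n _ => safe_of_wProp_oneInductive hinit hcons x s hx hs n,
      fun x s hx hP => ?_⟩
    have hnext := (hcons _ _ (x k) (wProp_window hx hP)).prop_last
    rwa [WTrans_fst_last hk, ← hx, Nat.sub_add_cancel hk] at hnext
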